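/- (Non-existence of mean field equilibrium with discontinuous cost) Consider the two-state mean field game with states {1,2}, actions {a,b}, Q_a = 0, Q_b = [[-1,1],[0,0]], initial distribution (1,0), and costs c_a(m) = 0, c_b(m) = -1 if m_2 ≤ 1/2 and +1 otherwise, with discount β > 0. Restricting to threshold policies π^{(τ)} (play b until τ, a afterwards) for τ ∈ [ln 2, ∞], no policy π^{(τ)} is a fixed point of the best-response map: the best response to any population trajectory m is π^{(σ)} with σ = sup{t : m_2(t) ≤ 1/2}, but under π^{(τ)} this σ lies in {ln 2, ∞} and π^{(ln 2)}, π^{(∞)} are best responses to each other rather than to themselves. -/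
import Mathlib


open MeasureTheory ENNReal

/-- Population distribution `m₂(t) = 1 - e^{-min(t,τ)}` under the threshold policy
`π^{(τ)}` (play `b` until time `τ ∈ [0,∞]`, play `a` afterwards), starting from `(1,0)`. -/
noncomputable def thresholdM2 (τ : ℝ≥0∞) (t : ℝ) : ℝ :=
  1 - Real.exp (-(if ENNReal.ofReal t ≤ τ then t else τ.toReal))

/-- Discounted cost of Player 0 using threshold policy `π^{(σ)}` against the
population trajectory induced by `π^{(τ)}`: actions `b` cost `-1` while `m₂ ≤ 1/2`
and `+1` afterwards, action `a` costs `0`. -/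
noncomputable def thresholdCost (β : ℝ) (σ τ : ℝ≥0∞) : ℝ :=
  ∫ t in Set.Ioi (0:ℝ),
    (if ENNReal.ofReal t < σ then (if thresholdM2 τ t ≤ 1/2 then (-1:ℝ) else 1) else 0)
      * Real.exp (-β * t)

namespace NoMFE

open Real Set

noncomputable def costInd (σ τ : ℝ≥0∞) (t : ℝ) : ℝ :=
  if ENNReal.ofReal t < σ then (if thresholdM2 τ t ≤ 1/2 then (-1:ℝ) else 1) else 0

lemma cost_eq (β : ℝ) (σ τ : ℝ≥0∞) :
    thresholdCost β σ τ = ∫ t in Set.Ioi (0:ℝ), costInd σ τ t * Real.exp (-β * t) := rfl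

lemma hL : (0:ℝ) < Real.log 2 := Real.log_pos (by norm_num)

lemma exp_neg_log_two : Real.exp (-Real.log 2) = 1/2 := by
  rw [Real.exp_neg, Real.exp_log (by norm_num : (0:ℝ) < 2)]; norm_num

lemma half_le_exp_iff (t : ℝ) : (1:ℝ)/2 ≤ Real.exp (-t) ↔ t ≤ Real.log 2 := by
  rw [← exp_neg_log_two, Real.exp_le_exp]; constructor <;> intro h <;> linarith

lemma m2_top_le (t : ℝ) : thresholdM2 ⊤ t ≤ 1/2 ↔ t ≤ Real.log 2 := by
  simp only [thresholdM2, le_top, if_true]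
  rw [← half_le_exp_iff]; constructor <;> intro h <;> linarith

lemma m2_log_le (t : ℝ) (ht : 0 < t) :
    thresholdM2 (ENNReal.ofReal (Real.log 2)) t ≤ 1/2 := by
  unfold thresholdM2
  split_ifs with h
  · have htL : t ≤ Real.log 2 := (ENNReal.ofReal_le_ofReal_iff hL.le).mp h
    have := (half_le_exp_iff t).mpr htL; linarith
  · rw [ENNReal.toReal_ofReal hL.le, exp_neg_log_two]; norm_num

lemma m2_finite (T : ℝ) (hT : Real.log 2 < T) (t : ℝ) (ht : 0 < t) :
    thresholdM2 (ENNReal.ofReal T) t ≤ 1/2 ↔ t ≤ Real.log 2 := by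
  unfold thresholdM2
  have hT0 : 0 < T := hL.trans hT
  rw [ENNReal.toReal_ofReal hT0.le]
  split_ifs with h
  · rw [← half_le_exp_iff]; constructor <;> intro hh <;> linarith [(half_le_exp_iff t)]
  · have hTt : T < t := by
      by_contra hc; push_neg at hc
      exact h (ENNReal.ofReal_le_ofReal hc)
    constructor
    · intro hh
      have : (1:ℝ)/2 ≤ Real.exp (-T) := by linarith
      have := (half_le_exp_iff T).mp this; linarith
    · intro hh; linarith

lemma meas_costInd (σ τ : ℝ≥0∞) : Measurable (costInd σ τ) := by
  unfold costInd thresholdM2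
  apply Measurable.ite
  · exact measurableSet_lt ENNReal.measurable_ofReal measurable_const
  · apply Measurable.ite ?_ measurable_const measurable_const
    apply measurableSet_le ?_ measurable_const
    apply Measurable.const_sub
    apply Real.measurable_exp.comp
    apply Measurable.neg
    exact Measurable.ite (measurableSet_le ENNReal.measurable_ofReal measurable_const)
      measurable_id measurable_const
  · exact measurable_const

lemma abs_costInd_le (σ τ : ℝ≥0∞) (t : ℝ) : |costInd σ τ t| ≤ 1 := by
  unfold costInd; split_ifs <;> simp

lemma integrable_g (β : ℝ) (hβ : 0 < β) (σ τ : ℝ≥0∞) :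
    IntegrableOn (fun t => costInd σ τ t * Real.exp (-β * t)) (Set.Ioi (0:ℝ)) := by
  have hexp : IntegrableOn (fun t => Real.exp (-β * t)) (Set.Ioi (0:ℝ)) :=
    exp_neg_integrableOn_Ioi 0 hβ
  have hm : Measurable fun t : ℝ => costInd σ τ t * Real.exp (-β * t) :=
    (meas_costInd σ τ).mul (Real.measurable_exp.comp ((measurable_id.const_mul (-β))))
  refine MeasureTheory.Integrable.mono hexp hm.aestronglyMeasurable.restrict
    (ae_of_all _ fun t => ?_)
  rw [Real.norm_eq_abs, Real.norm_eq_abs, abs_mul, abs_of_pos (Real.exp_pos _)]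
  nlinarith [abs_costInd_le σ τ t, Real.exp_pos (-β * t), abs_nonneg (costInd σ τ t)]

lemma exp_integrableOn (β : ℝ) (hβ : 0 < β) :
    IntegrableOn (fun t => Real.exp (-β * t)) (Set.Ioi (0:ℝ)) :=
  exp_neg_integrableOn_Ioi 0 hβ

/-- Generic monotonicity of the cost. -/
lemma cost_le (β : ℝ) (hβ : 0 < β) (σ₁ σ₂ τ : ℝ≥0∞)
    (h : ∀ᵐ t ∂(volume.restrict (Set.Ioi (0:ℝ))), costInd σ₁ τ t ≤ costInd σ₂ τ t) :
    thresholdCost β σ₁ τ ≤ thresholdCost β σ₂ τ := by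
  rw [cost_eq, cost_eq]
  refine integral_mono_ae (integrable_g β hβ σ₁ τ) (integrable_g β hβ σ₂ τ) ?_
  filter_upwards [h] with t ht
  exact mul_le_mul_of_nonneg_right ht (Real.exp_pos _).le

/-- Generic strict inequality: if the gap dominates an indicator of a nonempty interval. -/
lemma cost_lt (β : ℝ) (hβ : 0 < β) (σ₁ σ₂ τ : ℝ≥0∞) (a b : ℝ) (h0 : 0 < a) (hab : a < b)
    (h : ∀ᵐ t ∂(volume.restrict (Set.Ioi (0:ℝ))),
      costInd σ₁ τ t * Real.exp (-β * t)
        + Set.indicator (Set.Ioo a b) (fun t => Real.exp (-β * t)) t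
        ≤ costInd σ₂ τ t * Real.exp (-β * t)) :
    thresholdCost β σ₁ τ < thresholdCost β σ₂ τ := by
  have hexp := exp_integrableOn β hβ
  have hind : IntegrableOn (Set.indicator (Set.Ioo a b) (fun t => Real.exp (-β * t)))
      (Set.Ioi (0:ℝ)) := hexp.indicator measurableSet_Ioo
  have hsum := (integrable_g β hβ σ₁ τ).add hind
  have hmono : thresholdCost β σ₁ τ
      + ∫ t in Set.Ioi (0:ℝ), Set.indicator (Set.Ioo a b) (fun t => Real.exp (-β * t)) t
      ≤ thresholdCost β σ₂ τ := by
    rw [cost_eq, cost_eq, ← integral_add (integrable_g β hβ σ₁ τ) hind]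
    exact integral_mono_ae hsum (integrable_g β hβ σ₂ τ) h
  have hpos : 0 < ∫ t in Set.Ioi (0:ℝ),
      Set.indicator (Set.Ioo a b) (fun t => Real.exp (-β * t)) t := by
    rw [setIntegral_indicator measurableSet_Ioo]
    have : Set.Ioi (0:ℝ) ∩ Set.Ioo a b = Set.Ioo a b := by
      rw [Set.inter_eq_right]
      intro x hx; exact lt_trans h0 hx.1
    rw [this, ← integral_Ioc_eq_integral_Ioo, ← intervalIntegral.integral_of_le hab.le]
    exact intervalIntegral.intervalIntegral_pos_of_pos_on
      ((Real.continuous_exp.comp (by fun_prop)).intervalIntegrable a b)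
      (fun x _ => Real.exp_pos _) hab
  linarith

lemma inner_le {P P' Q : Prop} [Decidable P] [Decidable P'] [Decidable Q] (h : P' ↔ Q) :
    (if P' then (if Q then (-1:ℝ) else 1) else 0)
      ≤ (if P then (if Q then (-1:ℝ) else 1) else 0) := by
  split_ifs <;> simp_all <;> norm_num

lemma ae_ne (c : ℝ) : ∀ᵐ t ∂(volume.restrict (Set.Ioi (0:ℝ))), t ≠ c :=
  ae_restrict_of_ae (by simp [ae_iff])

end NoMFE

open NoMFE Set


/-- Non-existence of a mean field equilibrium with discontinuous cost: among the
threshold policies `π^{(τ)}`, `τ ∈ [ln 2, ∞]`, none is a fixed point of the best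
response map. Moreover `π^{(ln 2)}` is a best response to `π^{(∞)}` and `π^{(∞)}`
is a best response to `π^{(ln 2)}`. -/
theorem no_mean_field_equilibrium_discontinuous_cost (β : ℝ) (hβ : 0 < β) :
    (∀ σ : ℝ≥0∞, thresholdCost β (ENNReal.ofReal (Real.log 2)) ⊤ ≤ thresholdCost β σ ⊤) ∧
    (∀ σ : ℝ≥0∞, thresholdCost β ⊤ (ENNReal.ofReal (Real.log 2))
        ≤ thresholdCost β σ (ENNReal.ofReal (Real.log 2))) ∧
    (∀ τ : ℝ≥0∞, ENNReal.ofReal (Real.log 2) ≤ τ →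
      ∃ σ : ℝ≥0∞, thresholdCost β σ τ < thresholdCost β τ τ) := by
  set L := Real.log 2 with hLdef
  have hL0 : 0 < L := hL
  refine ⟨?_, ?_, ?_⟩
  · -- best response to ⊤ is ofReal L
    intro σ
    refine cost_le β hβ _ σ ⊤ ?_
    filter_upwards [ae_ne L, ae_restrict_mem measurableSet_Ioi] with t htne ht
    apply inner_le
    rw [m2_top_le, ENNReal.ofReal_lt_ofReal_iff hL0]
    exact ⟨fun h => h.le, fun h => lt_of_le_of_ne h htne⟩
  · -- best response to ofReal L is ⊤
    intro σ
    refine cost_le β hβ _ σ _ ?_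
    filter_upwards [ae_restrict_mem measurableSet_Ioi] with t ht
    exact inner_le (iff_of_true ENNReal.ofReal_lt_top (m2_log_le t ht))
  · -- no fixed point
    intro τ hτ
    by_cases hτtop : τ = ⊤
    · -- case τ = ⊤ : σ = ofReal L strictly better
      subst hτtop
      refine ⟨ENNReal.ofReal L, cost_lt β hβ _ _ _ L (L+1) hL0 (by linarith) ?_⟩
      filter_upwards [ae_ne L, ae_restrict_mem measurableSet_Ioi] with t htne ht
      have hQ := m2_top_le t
      unfold costInd
      rcases lt_or_gt_of_ne htne with hlt | hgt
      · rw [Set.indicator_of_notMem (by simp [Set.mem_Ioo]; intro h; linarith)]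
        have h1 : ENNReal.ofReal t < ENNReal.ofReal L :=
          (ENNReal.ofReal_lt_ofReal_iff hL0).mpr hlt
        have h2 : thresholdM2 ⊤ t ≤ 1/2 := hQ.mpr hlt.le
        simp [h1, h2, ENNReal.ofReal_lt_top]
      · have h1 : ¬ ENNReal.ofReal t < ENNReal.ofReal L := by
          rw [ENNReal.ofReal_lt_ofReal_iff hL0]; linarith
        have h2 : ¬ thresholdM2 ⊤ t ≤ 1/2 := by rw [hQ]; linarith
        simp only [h1, if_false, h2, ENNReal.ofReal_lt_top, if_true, zero_mul, zero_add, one_mul]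
        exact Set.indicator_le_self' (fun x _ => (Real.exp_pos _).le) t
    · -- τ finite
      have hτT : τ = ENNReal.ofReal τ.toReal := (ENNReal.ofReal_toReal hτtop).symm
      set T := τ.toReal with hTdef
      have hLT : L ≤ T := (ENNReal.ofReal_le_iff_le_toReal hτtop).mp hτ
      rcases eq_or_lt_of_le hLT with hLT' | hLT'
      · -- T = L : σ = ⊤ strictly better
        have hτL : τ = ENNReal.ofReal L := by rw [hτT, ← hLT']
        refine ⟨⊤, ?_⟩
        rw [hτL]
        refine cost_lt β hβ ⊤ (ENNReal.ofReal L) (ENNReal.ofReal L) L (L+1) hL0 (by linarith) ?_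
        filter_upwards [ae_restrict_mem measurableSet_Ioi] with t ht
        have hQ : thresholdM2 (ENNReal.ofReal L) t ≤ 1/2 := m2_log_le t ht
        have hind_le : Set.indicator (Set.Ioo L (L+1)) (fun t => Real.exp (-β * t)) t
            ≤ Real.exp (-β * t) := Set.indicator_le_self' (fun x _ => (Real.exp_pos _).le) t
        have he := Real.exp_pos (-β * t)
        unfold costInd
        rw [if_pos (ENNReal.ofReal_lt_top), if_pos hQ]
        by_cases hc : ENNReal.ofReal t < ENNReal.ofReal L
        · have htL : t < L := (ENNReal.ofReal_lt_ofReal_iff hL0).mp hc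
          rw [if_pos hc,
            Set.indicator_of_notMem (by simp [Set.mem_Ioo]; intro h; linarith)]
          simp
        · rw [if_neg hc]; linarith
      · -- L < T : σ = ofReal L strictly better
        have hT0 : 0 < T := hL0.trans hLT'
        refine ⟨ENNReal.ofReal L, ?_⟩
        refine cost_lt β hβ _ τ τ L T hL0 hLT' ?_
        filter_upwards [ae_ne L, ae_ne T, ae_restrict_mem measurableSet_Ioi] with t htL htT ht
        have hQ : (thresholdM2 τ t ≤ 1/2) ↔ t ≤ L := by
          rw [hτT]; exact m2_finite T hLT' t ht
        have he := Real.exp_pos (-β * t)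
        have hind_le : Set.indicator (Set.Ioo L T) (fun t => Real.exp (-β * t)) t
            ≤ Real.exp (-β * t) := Set.indicator_le_self' (fun x _ => (Real.exp_pos _).le) t
        unfold costInd
        rcases lt_trichotomy t L with h1 | h1 | h1
        · have e1 : ENNReal.ofReal t < ENNReal.ofReal L :=
            (ENNReal.ofReal_lt_ofReal_iff hL0).mpr h1
          have e2 : ENNReal.ofReal t < τ := by
            rw [hτT]; exact (ENNReal.ofReal_lt_ofReal_iff hT0).mpr (h1.trans hLT')
          have e3 : thresholdM2 τ t ≤ 1/2 := hQ.mpr h1.le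
          rw [Set.indicator_of_notMem (by simp [Set.mem_Ioo]; intro h; linarith)]
          simp [e1, e2, e3]
        · exact absurd h1 htL
        · have e1 : ¬ ENNReal.ofReal t < ENNReal.ofReal L := by
            rw [ENNReal.ofReal_lt_ofReal_iff hL0]; linarith
          have e3 : ¬ thresholdM2 τ t ≤ 1/2 := by rw [hQ]; push_neg; linarith
          rw [if_neg e1]
          rcases lt_trichotomy t T with h2 | h2 | h2
          · have e2 : ENNReal.ofReal t < τ := by
              rw [hτT]; exact (ENNReal.ofReal_lt_ofReal_iff hT0).mpr h2
            rw [if_pos e2, if_neg e3]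
            linarith
          · exact absurd h2 htT
          · have e2 : ¬ ENNReal.ofReal t < τ := by
              rw [hτT, ENNReal.ofReal_lt_ofReal_iff hT0]; linarith
            rw [if_neg e2, Set.indicator_of_notMem (by simp [Set.mem_Ioo]; intro h; linarith)]
            simp
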